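/- arXiv:1211.5509 — 4 statements merged into one kernel-verified Lean document; each statement's English description precedes it below -/
import Mathlib

section
/- Every σ-compact locally compact topological group G has a cocompact closed separable subgroup, i.e., there is a closed subgroup H of G which is separable (has a countable dense subset) such that the quotient space G/H is compact. -/
/-!
By σ-compactness, countably many right translates `K * {d}` of a compact neighbourhood `K` of `1`
cover `G`. The closure `H` of the subgroup generated by these `d` is separable, since that subgroup
is countable, and `K * H = G`, so `G ⧸ H` is the continuous image of the compact set `K`.
-/

open Set TopologicalSpace Pointwise Topology

theorem Set.Countable.subgroupClosure {G : Type*} [Group G] {D : Set G} (hD : D.Countable) :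
    (Subgroup.closure D : Set G).Countable := by
  have := hD.to_subtype
  rw [FreeGroup.closure_eq_range, MonoidHom.coe_range]
  exact countable_range _

theorem Set.Countable.separableSpace_closure {X : Type*} [TopologicalSpace X] {s : Set X}
    (hs : s.Countable) : SeparableSpace (closure s) :=
  have := hs.to_subtype
  ⟨range (inclusion subset_closure), countable_range _,
    Subtype.dense_iff.2 <| by rw [← range_comp, val_comp_inclusion, Subtype.range_coe]⟩

theorem exists_countable_mul_eq_univ {G : Type*} [Group G] [TopologicalSpace G]
    [IsTopologicalGroup G] [SigmaCompactSpace G] {U : Set G} (hU : U ∈ 𝓝 1) :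
    ∃ D : Set G, D.Countable ∧ U * D = univ := by
  obtain ⟨D, hD, hcover⟩ :=
    countable_cover_nhds_of_sigmaCompact fun g => mul_singleton_mem_nhds_of_nhds_one g hU
  refine ⟨D, hD, ?_⟩
  rwa [← mul_iUnion₂, biUnion_of_singleton] at hcover

theorem QuotientGroup.compactSpace_of_isCompact_mul_eq_univ {G : Type*} [Group G]
    [TopologicalSpace G] {H : Subgroup G} {K : Set G} (hK : IsCompact K)
    (hKH : K * (H : Set G) = univ) : CompactSpace (G ⧸ H) := by
  have : QuotientGroup.mk '' K = (univ : Set (G ⧸ H)) := by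
    rw [← (QuotientGroup.mk_surjective (s := H)).preimage_injective.eq_iff,
      preimage_image_mk_eq_mul, hKH, preimage_univ]
  exact ⟨this ▸ hK.image continuous_quotient_mk'⟩

/-- Every σ-compact locally compact topological group `G` has a cocompact
closed separable subgroup: a closed subgroup `H` which is separable as a topological space
and such that the quotient space `G/H` is compact. -/
theorem stmt2 {G : Type*} [Group G] [TopologicalSpace G] [IsTopologicalGroup G]
    [LocallyCompactSpace G] [SigmaCompactSpace G] :
    ∃ H : Subgroup G, IsClosed (H : Set G) ∧
      TopologicalSpace.SeparableSpace H ∧ CompactSpace (G ⧸ H) := by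
  obtain ⟨K, hK, hK1⟩ := exists_compact_mem_nhds (1 : G)
  obtain ⟨D, hD, hKD⟩ := exists_countable_mul_eq_univ hK1
  set H := (Subgroup.closure D).topologicalClosure
  have hDH : D ⊆ H := Subgroup.subset_closure.trans (Subgroup.le_topologicalClosure _)
  refine ⟨H, Subgroup.isClosed_topologicalClosure _,
    hD.subgroupClosure.separableSpace_closure,
    QuotientGroup.compactSpace_of_isCompact_mul_eq_univ hK ?_⟩
  exact univ_subset_iff.1 (hKD ▸ mul_subset_mul_left hDH)
end

section
/- Let f : ℚ_p → G be a nontrivial continuous group homomorphism from the additive group of p-adic numbers to a totally disconnected locally compact group G. Then f is a proper map, and either the kernel of f is a compact open subgroup of ℚ_p, or f is a topological isomorphism onto its closed image. -/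
/-!
By van Dantzig's theorem `G` has an open subgroup `H` avoiding some `f a ≠ 1`. A closed
subgroup of `ℚ_p` containing `x` contains the whole ball of radius `‖x‖` (as `ℤ` is dense in
`ℤ_p`), so a proper closed subgroup is bounded, hence compact. In particular `f⁻¹(H)` is
compact; as a compact subset of `G` meets finitely many cosets of `H`, `f` is proper. The kernel
is closed and proper, hence compact; it is either trivial, and then the proper injective map `f`
is a closed embedding, or it contains a ball around `0`, and then it is open.
-/

open Topology Set Filter

open scoped Pointwise

section OpenSubgroup

variable {G : Type*} [Group G] [TopologicalSpace G] [IsTopologicalGroup G]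

theorem exists_openSubgroup_subset_of_isCompact_isOpen {W : Set G} (hWc : IsCompact W)
    (hWo : IsOpen W) (hW1 : (1 : G) ∈ W) : ∃ H : OpenSubgroup G, (H : Set G) ⊆ W := by
  -- `H` is the stabilizer of `W` under left translation; it lies in `W` because `1 ∈ W`.
  obtain ⟨V, hV, hVW⟩ := compact_open_separated_mul_left hWc hWo subset_rfl
  have hstab : V ∩ V⁻¹ ⊆ MulAction.stabilizer G W := fun g ⟨hg, hg'⟩ ↦
    (Set.smul_set_subset_mul hg).trans hVW |>.antisymm <|
      Set.subset_smul_set_iff.2 <| (Set.smul_set_subset_mul (Set.mem_inv.1 hg')).trans hVW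
  refine ⟨⟨MulAction.stabilizer G W, Subgroup.isOpen_of_mem_nhds _
    (mem_of_superset (inter_mem hV (inv_mem_nhds_one G hV)) hstab)⟩, fun g hg ↦ ?_⟩
  have hgW : g • W = W := hg
  rw [← hgW]
  simpa using smul_mem_smul_set (a := g) hW1

/-- Van Dantzig's theorem. -/
theorem exists_openSubgroup_subset [LocallyCompactSpace G] [TotallyDisconnectedSpace G]
    {U : Set G} (hU : U ∈ 𝓝 1) : ∃ H : OpenSubgroup G, (H : Set G) ⊆ U := by
  obtain ⟨C, hC, hC1⟩ := exists_compact_mem_nhds (1 : G)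
  obtain ⟨W, ⟨hWclopen, hW1, hWsub⟩⟩ :=
    loc_compact_Haus_tot_disc_of_zero_dim.mem_nhds_iff.1 (inter_mem hU hC1)
  obtain ⟨H, hH⟩ := exists_openSubgroup_subset_of_isCompact_isOpen
    (hC.of_isClosed_subset hWclopen.1 (hWsub.trans inter_subset_right)) hWclopen.2 hW1
  exact ⟨H, hH.trans (hWsub.trans inter_subset_left)⟩

end OpenSubgroup

section Proper

variable {A G : Type*} [Group A] [TopologicalSpace A] [ContinuousConstSMul A A] [Group G]

theorem MonoidHom.isCompact_preimage_smul (f : A →* G) {H : Subgroup G}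
    (hH : IsCompact (f ⁻¹' H)) (g : G) : IsCompact (f ⁻¹' (g • (H : Set G))) := by
  rcases eq_empty_or_nonempty (f ⁻¹' (g • (H : Set G))) with hempty | ⟨x, hx⟩
  · simp [hempty]
  have hcoset : f ⁻¹' (g • (H : Set G)) = x • f ⁻¹' H := by
    rw [leftCoset_eq_iff H |>.2 (mem_leftCoset_iff g |>.1 hx)]
    ext y
    simp [mem_leftCoset_iff]
  rw [hcoset]
  exact hH.smul x

theorem MonoidHom.isProperMap_of_isCompact_preimage [TopologicalSpace G] [IsTopologicalGroup G]
    [T2Space G] [CompactlyCoherentSpace G] (f : A →* G) (hf : Continuous f) (H : OpenSubgroup G)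
    (hH : IsCompact (f ⁻¹' H)) : IsProperMap f := by
  refine isProperMap_iff_isCompact_preimage.2 ⟨hf, fun C hC ↦ ?_⟩
  obtain ⟨t, hCt⟩ := hC.elim_finite_subcover (fun g : G ↦ g • ((H : Subgroup G) : Set G))
    (fun g ↦ H.isOpen.smul g)
    (fun g _ ↦ mem_iUnion.2 ⟨g, mem_leftCoset_iff g |>.2 (by simp)⟩)
  refine (t.isCompact_biUnion fun g _ ↦ f.isCompact_preimage_smul hH g).of_isClosed_subset
    (hC.isClosed.preimage hf) ?_
  simpa only [preimage_iUnion] using preimage_mono hCt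

end Proper

namespace Padic

variable {p : ℕ} [Fact p.Prime] {H : AddSubgroup ℚ_[p]}

theorem closedBall_subset_addSubgroup (hH : IsClosed (H : Set ℚ_[p])) {x : ℚ_[p]}
    (hx : x ∈ H) : Metric.closedBall 0 ‖x‖ ⊆ (H : Set ℚ_[p]) := by
  intro y hy
  rw [mem_closedBall_zero_iff] at hy
  rcases eq_or_ne x 0 with rfl | hx0
  · simp_all
  have hyx : ‖y / x‖ ≤ 1 := by
    rw [norm_div]
    exact div_le_one_of_le₀ hy (norm_nonneg x)
  have key : ∀ z : ℤ_[p], (z : ℚ_[p]) * x ∈ H := fun z ↦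
    PadicInt.denseRange_intCast.induction_on z
      (hH.preimage (continuous_subtype_val.mul continuous_const))
      (fun n ↦ by simpa [zsmul_eq_mul] using H.zsmul_mem hx n)
  simpa [hx0] using key ⟨y / x, hyx⟩

theorem isCompact_addSubgroup_of_notMem (hH : IsClosed (H : Set ℚ_[p])) {y : ℚ_[p]}
    (hy : y ∉ H) : IsCompact (H : Set ℚ_[p]) := by
  refine Metric.isCompact_of_isClosed_isBounded hH
    ((Metric.isBounded_closedBall (x := 0) (r := ‖y‖)).subset fun x hx ↦ ?_)
  by_contra hxy
  rw [mem_closedBall_zero_iff, not_le] at hxy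
  exact hy (closedBall_subset_addSubgroup hH hx (mem_closedBall_zero_iff.2 hxy.le))

theorem isOpen_addSubgroup_of_mem_of_ne_zero (hH : IsClosed (H : Set ℚ_[p])) {x : ℚ_[p]}
    (hx : x ∈ H) (hx0 : x ≠ 0) : IsOpen (H : Set ℚ_[p]) :=
  H.isOpen_of_mem_nhds <| mem_of_superset
    (Metric.closedBall_mem_nhds 0 (norm_pos_iff.2 hx0)) (closedBall_subset_addSubgroup hH hx)

end Padic

/-- Let `f : ℚ_p → G` be a nontrivial continuous homomorphism from the
additive group of the `p`-adic numbers to a totally disconnected locally compact group `G`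
(written multiplicatively, whence the use of `Multiplicative ℚ_[p]`).  Then `f` is a proper
map, and either the kernel of `f` is a compact open subgroup of `ℚ_p`, or `f` is a
topological isomorphism onto its closed image (i.e. a closed embedding). -/
theorem stmt3 {p : ℕ} [Fact p.Prime] {G : Type*} [Group G] [TopologicalSpace G]
    [IsTopologicalGroup G] [LocallyCompactSpace G] [TotallyDisconnectedSpace G]
    (f : Multiplicative ℚ_[p] →* G) (hf : Continuous f) (hnt : f ≠ 1) :
    IsProperMap (⇑f) ∧
      ((IsCompact {x : Multiplicative ℚ_[p] | f x = 1} ∧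
          IsOpen {x : Multiplicative ℚ_[p] | f x = 1}) ∨
        IsClosedEmbedding (⇑f)) := by
  obtain ⟨a, ha⟩ : ∃ a, f a ≠ 1 := DFunLike.ne_iff.1 hnt
  obtain ⟨H, haH⟩ := exists_openSubgroup_subset (isOpen_compl_singleton.mem_nhds (Ne.symm ha))
  have hproper : IsProperMap f := f.isProperMap_of_isCompact_preimage hf H <|
    Padic.isCompact_addSubgroup_of_notMem (H := Subgroup.toAddSubgroup' ((H : Subgroup G).comap f))
      (H.isClosed.preimage hf) (y := a.toAdd) fun h ↦ haH h rfl
  refine ⟨hproper, ?_⟩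
  by_cases hinj : Function.Injective f
  · exact .inr (.of_continuous_injective_isClosedMap hf hinj hproper.isClosedMap)
  obtain ⟨x, hx, hx1⟩ : ∃ x, f x = 1 ∧ x ≠ 1 := by
    simpa [injective_iff_map_eq_one] using hinj
  have hker : IsClosed (Subgroup.toAddSubgroup' f.ker : Set ℚ_[p]) :=
    isClosed_singleton.preimage hf
  exact .inl ⟨Padic.isCompact_addSubgroup_of_notMem hker (y := a.toAdd) ha,
    Padic.isOpen_addSubgroup_of_mem_of_ne_zero hker (x := x.toAdd) hx hx1⟩
end

section
/- Let Z = ⊕_ℕ ℤ be embedded as a central subgroup of a finitely generated group Γ, let A be a topological abelian group, and let f : Z → A be a homomorphism whose image has cocompact closure in A. Then the graph F = {(z, f(z)) : z ∈ Z} is a central subgroup of Γ × A (with Γ discrete), the quotient map Γ × A → (Γ × A)/F restricts to an injective open map on {1} × A, and (Γ × A)/F is compactly generated whenever A is locally compact. -/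
/-! Modulo the graph `F`, `(1, f z)` equals `((ι z)⁻¹, 1)`, so the image of `f` is swallowed by
the image of `Γ`. If `A` is locally compact and `closure (f Z)` is cocompact, then `A` is generated
by a compact set together with `f Z`; hence the quotient is generated by the image of a finite
generating set of `Γ` together with the image of that compact set. -/

open Set Pointwise

theorem IsOpenMap.exists_isCompact_image_eq_univ {X Y : Type*} [TopologicalSpace X]
    [TopologicalSpace Y] [WeaklyLocallyCompactSpace X] [CompactSpace Y] {p : X → Y}
    (hp : IsOpenMap p) (hsurj : Function.Surjective p) :
    ∃ K : Set X, IsCompact K ∧ p '' K = univ := by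
  choose K hK hKx using fun x : X => exists_compact_mem_nhds x
  obtain ⟨t, ht⟩ := isCompact_univ.elim_finite_subcover (fun x => p '' interior (K x))
    (fun x => hp _ isOpen_interior)
    (fun y _ => by
      obtain ⟨x, rfl⟩ := hsurj y
      exact mem_iUnion.2 ⟨x, mem_image_of_mem p (mem_interior_iff_mem_nhds.2 (hKx x))⟩)
  refine ⟨⋃ x ∈ t, K x, t.isCompact_biUnion fun x _ => hK x, eq_univ_of_univ_subset ?_⟩
  intro y hy
  obtain ⟨x, hxt, z, hz, rfl⟩ := by simpa using ht hy
  exact mem_image_of_mem p (mem_biUnion hxt (interior_subset hz))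

theorem Subgroup.exists_isCompact_closure_sup_eq_top {A : Type*} [Group A] [TopologicalSpace A]
    [IsTopologicalGroup A] [WeaklyLocallyCompactSpace A] (H : Subgroup A)
    [CompactSpace (A ⧸ H.topologicalClosure)] :
    ∃ C : Set A, IsCompact C ∧ Subgroup.closure C ⊔ H = ⊤ := by
  obtain ⟨K, hK, hKH⟩ := QuotientGroup.isOpenMap_coe.exists_isCompact_image_eq_univ
    (QuotientGroup.mk_surjective (s := H.topologicalClosure))
  obtain ⟨U, hU, hU1⟩ := exists_compact_mem_nhds (1 : A)
  have hH : _root_.closure (H : Set A) ⊆ (H : Set A) * (U ∪ U⁻¹) :=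
    closure_subset_mul_right_of_mem_nhds_one_of_inv _
      (Filter.mem_of_superset hU1 subset_union_left) fun x hx => by
        rw [mem_union, mem_inv] at hx ⊢
        rwa [or_comm, inv_inv]
  refine ⟨K ∪ (U ∪ U⁻¹), hK.union (hU.union hU.inv), eq_top_iff.2 fun a _ => ?_⟩
  obtain ⟨k, hk, hka⟩ : QuotientGroup.mk a ∈ QuotientGroup.mk '' K := hKH ▸ mem_univ _
  obtain ⟨h, hh, v, hv, hhv⟩ := hH (QuotientGroup.eq.1 hka)
  have hmem : ∀ x ∈ K ∪ (U ∪ U⁻¹), x ∈ Subgroup.closure (K ∪ (U ∪ U⁻¹)) ⊔ H :=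
    fun x hx => Subgroup.mem_sup_left (Subgroup.subset_closure hx)
  have ha : a = k * h * v := by
    rw [mul_assoc, show h * v = k⁻¹ * a from hhv, mul_inv_cancel_left]
  rw [ha]
  exact mul_mem (mul_mem (hmem k (Or.inl hk)) (Subgroup.mem_sup_right hh)) (hmem v (Or.inr hv))

theorem exists_isCompact_closure_eq_top_of_range_sup_range {G A Q : Type*} [Group G] [Group A]
    [TopologicalSpace A] [IsTopologicalGroup A] [WeaklyLocallyCompactSpace A] [Group Q]
    [TopologicalSpace Q] (hG : Group.FG G) (φ : G →* Q) (ψ : A →* Q) (hψ : Continuous ψ)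
    (H : Subgroup A) [CompactSpace (A ⧸ H.topologicalClosure)] (hHφ : H.map ψ ≤ φ.range)
    (hsup : φ.range ⊔ ψ.range = ⊤) :
    ∃ C : Set Q, IsCompact C ∧ Subgroup.closure C = ⊤ := by
  obtain ⟨S, hS, hSfin⟩ := Group.fg_iff.1 hG
  obtain ⟨C, hC, hCH⟩ := H.exists_isCompact_closure_sup_eq_top
  refine ⟨φ '' S ∪ ψ '' C, (hSfin.image φ).isCompact.union (hC.image hψ), ?_⟩
  rw [Subgroup.closure_union, ← MonoidHom.map_closure, ← MonoidHom.map_closure, hS,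
    ← MonoidHom.range_eq_map, eq_top_iff, ← hsup]
  refine sup_le le_sup_left ?_
  rw [MonoidHom.range_eq_map, ← hCH, Subgroup.map_sup]
  exact sup_le le_sup_right (hHφ.trans le_sup_left)

theorem MonoidHom.range_comp_inl_sup_range_comp_inr {G A Q : Type*} [Group G] [Group A]
    [Group Q] (π : G × A →* Q) (hπ : Function.Surjective π) :
    (π.comp (MonoidHom.inl G A)).range ⊔ (π.comp (MonoidHom.inr G A)).range = ⊤ := by
  refine eq_top_iff.2 fun q _ => ?_
  obtain ⟨⟨g, a⟩, rfl⟩ := hπ q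
  have hga : (g, a) = (g, (1 : A)) * ((1 : G), a) := by simp
  rw [hga, map_mul]
  exact Subgroup.mul_mem_sup ⟨g, rfl⟩ ⟨a, rfl⟩

section Graph

variable {M G A : Type*} [Group M] [Group G] [Group A] (ι : M →* G) (f : M →* A)

theorem MonoidHom.range_prod_le_center (hι : ι.range ≤ Subgroup.center G)
    (hf : f.range ≤ Subgroup.center A) : (ι.prod f).range ≤ Subgroup.center (G × A) := by
  rintro _ ⟨z, rfl⟩
  rw [Subgroup.center_prod]
  exact ⟨hι ⟨z, rfl⟩, hf ⟨z, rfl⟩⟩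

theorem QuotientGroup.injective_mk_one_prod (hι : Function.Injective ι) :
    Function.Injective
      (fun a : A => (QuotientGroup.mk ((1 : G), a) : (G × A) ⧸ (ι.prod f).range)) := by
  intro a b hab
  obtain ⟨z, hz⟩ := QuotientGroup.eq.1 hab
  obtain ⟨hιz, hfz⟩ := Prod.ext_iff.1 hz
  have hz1 : z = 1 := hι (by simpa using hιz)
  have hab' : (1 : A) = a⁻¹ * b := by simpa [hz1] using hfz
  exact inv_mul_eq_one.1 hab'.symm

theorem QuotientGroup.mk_one_prod_apply_eq_mk_inv [(ι.prod f).range.Normal] (z : M) :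
    (QuotientGroup.mk ((1 : G), f z) : (G × A) ⧸ (ι.prod f).range)
      = QuotientGroup.mk ((ι z)⁻¹, (1 : A)) :=
  QuotientGroup.eq.2 ⟨z⁻¹, by simp⟩

end Graph

theorem QuotientGroup.isOpenMap_mk_one_prod {G A : Type*} [Group G] [TopologicalSpace G]
    [DiscreteTopology G] [Group A] [TopologicalSpace A] [IsTopologicalGroup A]
    (N : Subgroup (G × A)) :
    IsOpenMap (fun a : A => (QuotientGroup.mk ((1 : G), a) : (G × A) ⧸ N)) := by
  refine QuotientGroup.isOpenMap_coe.comp fun U hU => ?_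
  rw [← singleton_prod]
  exact (isOpen_discrete _).prod hU

/-- Let `Z = ⊕_ℕ ℤ` be embedded as a central subgroup of a finitely
generated group `Γ` via `ι`, let `A` be a topological abelian group, and let `f : Z → A`
be a homomorphism whose image has cocompact closure in `A`.  Then the graph
`F = {(ι z, f z)}` is a central subgroup of `Γ × A` (with `Γ` discrete), the quotient map
`Γ × A → (Γ × A)/F` restricts to an injective open map on `{1} × A`, and `(Γ × A)/F` is
compactly generated whenever `A` is locally compact. -/
theorem stmt7 {Γ A : Type*} [Group Γ] [TopologicalSpace Γ] [DiscreteTopology Γ]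
    [CommGroup A] [TopologicalSpace A] [IsTopologicalGroup A]
    (hΓfg : Group.FG Γ)
    (ι : Multiplicative (ℕ →₀ ℤ) →* Γ) (hι : Function.Injective ι)
    (hcent : ι.range ≤ Subgroup.center Γ)
    (f : Multiplicative (ℕ →₀ ℤ) →* A)
    (hcoc : CompactSpace (A ⧸ f.range.topologicalClosure)) :
    (ι.prod f).range ≤ Subgroup.center (Γ × A) ∧
    Function.Injective
      (fun a : A => (QuotientGroup.mk ((1 : Γ), a) : (Γ × A) ⧸ (ι.prod f).range)) ∧
    IsOpenMap
      (fun a : A => (QuotientGroup.mk ((1 : Γ), a) : (Γ × A) ⧸ (ι.prod f).range)) ∧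
    (LocallyCompactSpace A → ∀ [inst : (ι.prod f).range.Normal],
      ∃ C : Set ((Γ × A) ⧸ (ι.prod f).range), IsCompact C ∧ Subgroup.closure C = ⊤) := by
  refine ⟨ι.range_prod_le_center f hcent (by simp [CommGroup.center_eq_top]),
    QuotientGroup.injective_mk_one_prod ι f hι, QuotientGroup.isOpenMap_mk_one_prod _,
    fun _ _ => ?_⟩
  set π := QuotientGroup.mk' (ι.prod f).range
  refine exists_isCompact_closure_eq_top_of_range_sup_range hΓfg (π.comp (MonoidHom.inl Γ A))
    (π.comp (MonoidHom.inr Γ A)) (QuotientGroup.continuous_mk.comp (continuous_const.prodMk continuous_id)) f.range ?_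
    (π.range_comp_inl_sup_range_comp_inr (QuotientGroup.mk'_surjective _))
  rintro _ ⟨_, ⟨z, rfl⟩, rfl⟩
  exact ⟨(ι z)⁻¹, (QuotientGroup.mk_one_prod_apply_eq_mk_inv ι f z).symm⟩
end

section
/- Let Λ be an infinitely generated (i.e. not finitely generated) subgroup of ℤ_p^×, let H = ℤ_p ⋊ Λ with Λ discrete acting by multiplication, and suppose H is an open subgroup of a locally compact group G. Then G has a discrete abelian quotient containing a copy of Λ, hence an infinitely generated discrete abelian quotient; in particular G is not compactly generated. -/
/-!
The image of `ℤ_p` is a compact open subgroup of `G`, so every `g ∈ G` conjugates some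
`p ^ n ℤ_p` into `ℤ_p`. Additive endomorphisms of `ℤ_p` are `ℤ_p`-linear, so this
conjugation is multiplication by a scalar `λ(g) = c / p ^ n ∈ ℚ_pˣ`, independent of `n`.
Then `λ : G → ℚ_pˣ` is a homomorphism which is `ρ` on `Λ` and whose kernel contains the
open subgroup `ℤ_p`. Hence `G ⧸ ker λ` is discrete and abelian and contains `Λ`, so it is
not finitely generated (subgroups of finitely generated abelian groups are); a compact
generating set of `G` would have finite image generating it.
-/

open Topology

/-- Transporting additive automorphisms to multiplicative automorphisms, as a group
homomorphism. -/
def addAutToMulAut (A : Type*) [AddGroup A] : Multiplicative (AddAut A) →* MulAut (Multiplicative A) where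
  toFun e := AddEquiv.toMultiplicative e.toAdd
  map_one' := by ext x; rfl
  map_mul' e₁ e₂ := by ext x; rfl

/-- The action of a group `Λ` of `p`-adic units on the additive group `ℤ_p` by
multiplication. -/
noncomputable def unitsAction (p : ℕ) [Fact p.Prime] {Λ : Type*} [Group Λ]
    (ρ : Λ →* ℤ_[p]ˣ) : Λ →* MulAut (Multiplicative ℤ_[p]) :=
  (addAutToMulAut ℤ_[p]).comp (AddAut.mulLeft.comp ρ)

/-- The product topology on a semidirect product; for `ℤ_p ⋊ Λ` with `Λ` discrete this
makes `ℤ_p` a compact open subgroup. -/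
instance semidirectProductTopology (N G : Type*) [Group N] [Group G] (φ : G →* MulAut N)
    [TopologicalSpace N] [TopologicalSpace G] : TopologicalSpace (N ⋊[φ] G) :=
  TopologicalSpace.induced (fun w : N ⋊[φ] G => (w.left, w.right)) inferInstance

open IsLocalRing Function

namespace PadicInt

variable {p : ℕ} [Fact p.Prime]

lemma eq_of_forall_pow_dvd_sub {x y : ℤ_[p]} (h : ∀ n : ℕ, (p : ℤ_[p]) ^ n ∣ x - y) :
    x = y := by
  refine (IsHausdorff.eq_iff_smodEq (I := maximalIdeal ℤ_[p])).mpr fun n => ?_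
  simpa [SModEq.sub_mem, maximalIdeal_eq_span_p, Ideal.span_singleton_pow,
    Ideal.mem_span_singleton] using h n

lemma addMonoidHom_map_mul (F : ℤ_[p] →+ ℤ_[p]) (c x : ℤ_[p]) : F (c * x) = c * F x := by
  -- `c` is the natural number `appr c n` up to a multiple of `p ^ n`, and `F` is `ℕ`-linear.
  refine eq_of_forall_pow_dvd_sub fun n => ?_
  obtain ⟨d, hd⟩ := Ideal.mem_span_singleton.mp (appr_spec n c)
  have hc : c = (appr c n : ℕ) + ((p ^ n : ℕ) : ℤ_[p]) * d := by
    push_cast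
    linear_combination hd
  refine ⟨F (d * x) - d * F x, ?_⟩
  rw [hc, add_mul, map_add, mul_assoc, ← nsmul_eq_mul, ← nsmul_eq_mul, map_nsmul, map_nsmul,
    nsmul_eq_mul, nsmul_eq_mul]
  push_cast
  ring

lemma exists_pow_mul_mem_of_mem_nhds_zero {U : Set ℤ_[p]} (hU : U ∈ 𝓝 0) :
    ∃ n : ℕ, ∀ x : ℤ_[p], (p : ℤ_[p]) ^ n * x ∈ U := by
  obtain ⟨ε, hε, hball⟩ := Metric.mem_nhds_iff.mp hU
  have hp : (1 : ℝ) < p := mod_cast (Fact.out : p.Prime).one_lt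
  obtain ⟨n, hn⟩ := exists_pow_lt_of_lt_one hε (inv_lt_one_of_one_lt₀ hp)
  refine ⟨n, fun x => hball ?_⟩
  rw [Metric.mem_ball, dist_zero_right, norm_mul, norm_p_pow, zpow_neg, zpow_natCast,
    ← inv_pow]
  exact (mul_le_of_le_one_right (by positivity) x.norm_le_one).trans_lt hn

end PadicInt

namespace SemidirectProduct

variable {N H : Type*} [Group N] [Group H] {φ : H →* MulAut N}

lemma isOpenEmbedding_inl [TopologicalSpace N] [TopologicalSpace H] [DiscreteTopology H] :
    IsOpenEmbedding (inl : N → N ⋊[φ] H) := by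
  let e : N ⋊[φ] H → N × H := fun w => (w.left, w.right)
  have he : IsInducing e := .induced e
  refine ⟨⟨(he.of_comp_iff).mp (isEmbedding_prodMkLeft 1).isInducing, inl_injective⟩, ?_⟩
  have hrange : Set.range (inl : N → N ⋊[φ] H) = e ⁻¹' (Set.univ ×ˢ {1}) := by
    ext w
    refine ⟨?_, fun hw => ⟨w.left, SemidirectProduct.ext rfl hw.2.symm⟩⟩
    rintro ⟨n, rfl⟩
    exact ⟨trivial, rfl⟩
  rw [hrange]
  exact (isOpen_univ.prod (isOpen_discrete _)).preimage he.continuous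

end SemidirectProduct

lemma CommGroup.fg_of_injective {Λ A : Type*} [Group Λ] [CommGroup A] [Group.FG A] {f : Λ →* A}
    (hf : Injective f) : Group.FG Λ := by
  have : Module.Finite ℤ (Additive A) :=
    Module.Finite.iff_addGroup_fg.mpr (GroupFG.iff_add_fg.mp ‹_›)
  have hfg := IsNoetherian.noetherian (AddSubgroup.toIntSubmodule f.range.toAddSubgroup)
  rw [Submodule.fg_iff_addSubgroup_fg] at hfg
  have : Group.FG f.range := by
    rw [Group.fg_iff_subgroup_fg, Subgroup.fg_iff_add_fg]
    simpa using hfg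
  exact Group.fg_of_surjective (f := (MonoidHom.ofInjective hf).symm.toMonoidHom)
    (MonoidHom.ofInjective hf).symm.surjective

namespace QuotientGroup

variable {G A : Type*} [Group G] [CommGroup A] (φ : G →* A)

lemma mul_comm_of_ker (a b : G ⧸ φ.ker) : a * b = b * a :=
  kerLift_injective φ (by rw [map_mul, map_mul, mul_comm])

variable {φ} {Λ : Type*} [Group Λ] {f : Λ →* G}

lemma injective_mk'_comp (hf : Injective (φ.comp f)) : Injective ((mk' φ.ker).comp f) :=
  fun a b hab => hf (by simpa using congrArg (kerLift φ) hab)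

lemma not_fg_of_injective (hΛ : ¬ Group.FG Λ) (hf : Injective (φ.comp f)) :
    ¬ Group.FG (G ⧸ φ.ker) := fun _ =>
  have : Group.FG φ.range := Group.fg_of_surjective (quotientKerEquivRange φ).surjective
  hΛ (CommGroup.fg_of_injective (f := φ.rangeRestrict.comp f)
    fun a b hab => hf (by simpa [Subtype.ext_iff] using hab))

lemma fg_of_isCompact_closure_eq_top [TopologicalSpace G] (N : Subgroup G) [N.Normal]
    [DiscreteTopology (G ⧸ N)] {C : Set G} (hC : IsCompact C) (hgen : Subgroup.closure C = ⊤) :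
    Group.FG (G ⧸ N) := by
  refine Group.fg_iff.mpr ⟨mk' N '' C, ?_, (hC.image continuous_mk).finite_of_discrete⟩
  rw [← MonoidHom.map_closure (mk' N), hgen, ← MonoidHom.range_eq_map, range_mk']

end QuotientGroup

section ConjScalar

variable {p : ℕ} [Fact p.Prime] {G : Type*} [Group G] (ι : Multiplicative ℤ_[p] →* G)

/-- Conjugation by `g` acts on `ι (p ^ n ℤ_p)` as multiplication by the `p`-adic number
`c / p ^ n`. -/
def IsConjScalar (g : G) (n : ℕ) (c : ℤ_[p]) : Prop :=
  ∀ x : ℤ_[p], g * ι (.ofAdd (p ^ n * x)) * g⁻¹ = ι (.ofAdd (c * x))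

lemma isConjScalar_one : IsConjScalar ι 1 0 1 := fun x => by simp

lemma isConjScalar_apply (y : Multiplicative ℤ_[p]) : IsConjScalar ι (ι y) 0 1 := fun x => by
  rw [pow_zero, one_mul, ((Commute.all _ _).map ι).eq, mul_inv_cancel_right]

variable {ι}

lemma IsConjScalar.mul {g h : G} {n m : ℕ} {c d : ℤ_[p]} (hg : IsConjScalar ι g n c)
    (hh : IsConjScalar ι h m d) : IsConjScalar ι (g * h) (n + m) (c * d) := fun x => by
  calc g * h * ι (.ofAdd (p ^ (n + m) * x)) * (g * h)⁻¹
      = g * (h * ι (.ofAdd (p ^ m * (p ^ n * x))) * h⁻¹) * g⁻¹ := by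
        rw [pow_add, mul_comm ((p : ℤ_[p]) ^ n), mul_assoc]
        group
    _ = ι (.ofAdd (c * d * x)) := by rw [hh, mul_left_comm, hg, mul_assoc]

lemma IsConjScalar.div_eq_div (hι : Injective ι) {g : G} {n m : ℕ} {c d : ℤ_[p]}
    (h₁ : IsConjScalar ι g n c) (h₂ : IsConjScalar ι g m d) :
    (c : ℚ_[p]) / p ^ n = d / p ^ m := by
  have h : c * p ^ m = d * p ^ n := by
    have := (h₁ (p ^ m)).symm.trans (mul_comm ((p : ℤ_[p]) ^ n) (p ^ m) ▸ h₂ (p ^ n))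
    exact Multiplicative.ofAdd.injective (hι this)
  have hp : (p : ℚ_[p]) ≠ 0 := mod_cast (Fact.out : p.Prime).ne_zero
  rw [div_eq_div_iff (pow_ne_zero _ hp) (pow_ne_zero _ hp)]
  simpa using congrArg ((↑) : ℤ_[p] → ℚ_[p]) h

variable [TopologicalSpace G] [IsTopologicalGroup G]

/-- Since `ι (ℤ_p)` is open, conjugation by `g` maps some `ι (p ^ n ℤ_p)` into it; the induced
additive map `ℤ_p → ℤ_p` is multiplication by a scalar. -/
lemma exists_isConjScalar (hι : IsOpenEmbedding ι) (g : G) : ∃ n c, IsConjScalar ι g n c := by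
  have hU : (fun x : ℤ_[p] => g * ι (.ofAdd x) * g⁻¹) ⁻¹' Set.range ι ∈ 𝓝 0 := by
    refine (hι.isOpen_range.preimage ?_).mem_nhds ⟨1, by simp⟩
    have := hι.continuous
    fun_prop
  obtain ⟨n, hn⟩ := PadicInt.exists_pow_mul_mem_of_mem_nhds_zero hU
  choose f hf using hn
  let F : ℤ_[p] →+ ℤ_[p] := AddMonoidHom.mk' (fun x => (f x).toAdd) fun x y => by
    refine Multiplicative.ofAdd.injective (hι.injective ?_)
    simp only [ofAdd_add, ofAdd_toAdd, map_mul, hf, mul_add]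
    group
  refine ⟨n, F 1, fun x => ?_⟩
  rw [mul_comm (F 1), ← PadicInt.addMonoidHom_map_mul, mul_one]
  exact (hf x).symm

noncomputable def conjScalar (hι : IsOpenEmbedding ι) : G →* ℚ_[p]ˣ :=
  have spec g := (exists_isConjScalar hι g).choose_spec.choose_spec
  MonoidHom.toHomUnits
    { toFun g :=
        (exists_isConjScalar hι g).choose_spec.choose / p ^ (exists_isConjScalar hι g).choose
      map_one' := ((spec 1).div_eq_div hι.injective (isConjScalar_one ι)).trans (by simp)
      map_mul' g h := by
        rw [(spec (g * h)).div_eq_div hι.injective ((spec g).mul (spec h)), div_mul_div_comm,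
          pow_add, PadicInt.coe_mul] }

variable (hι : IsOpenEmbedding ι)

lemma conjScalar_eq {g : G} {n : ℕ} {c : ℤ_[p]} (h : IsConjScalar ι g n c) :
    (conjScalar hι g : ℚ_[p]) = c / p ^ n :=
  (exists_isConjScalar hι g).choose_spec.choose_spec.div_eq_div hι.injective h

lemma isOpen_ker_conjScalar : IsOpen ((conjScalar hι).ker : Set G) := by
  refine Subgroup.isOpen_mono (H₁ := ι.range) ?_ (by simpa using hι.isOpen_range)
  rintro _ ⟨y, rfl⟩
  rw [MonoidHom.mem_ker, Units.ext_iff, conjScalar_eq hι (isConjScalar_apply ι y)]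
  simp

end ConjScalar

lemma isConjScalar_inr {p : ℕ} [Fact p.Prime] {Λ : Type*} [Group Λ] (ρ : Λ →* ℤ_[p]ˣ)
    {G : Type*} [Group G] (j : Multiplicative ℤ_[p] ⋊[unitsAction p ρ] Λ →* G) (a : Λ) :
    IsConjScalar (j.comp SemidirectProduct.inl) (j (.inr a)) 0 (ρ a) := fun x => by
  rw [pow_zero, one_mul, MonoidHom.comp_apply, MonoidHom.comp_apply, ← map_inv, ← map_inv,
    ← map_mul, ← map_mul, ← SemidirectProduct.inl_aut]
  rfl

lemma injective_conjScalar_comp_inr {p : ℕ} [Fact p.Prime] {Λ : Type*} [Group Λ]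
    {ρ : Λ →* ℤ_[p]ˣ} (hρ : Injective ρ) {G : Type*} [Group G] [TopologicalSpace G]
    [IsTopologicalGroup G] {j : Multiplicative ℤ_[p] ⋊[unitsAction p ρ] Λ →* G}
    (hι : IsOpenEmbedding (j.comp SemidirectProduct.inl)) :
    Injective ((conjScalar hι).comp (j.comp SemidirectProduct.inr)) := fun a b hab => by
  have h := congrArg Units.val hab
  simp only [MonoidHom.comp_apply, conjScalar_eq hι (isConjScalar_inr ρ j _), pow_zero,
    div_one] at h
  exact hρ (Units.ext (PadicInt.ext h))

theorem stmt18_general (p : ℕ) [Fact p.Prime] (Λ : Type*) [Group Λ] [TopologicalSpace Λ]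
    [DiscreteTopology Λ] (ρ : Λ →* ℤ_[p]ˣ) (hρ : Function.Injective ρ)
    (hΛ : ¬ Group.FG Λ)
    {G : Type*} [Group G] [TopologicalSpace G] [IsTopologicalGroup G]
    (j : (Multiplicative ℤ_[p] ⋊[unitsAction p ρ] Λ) →* G)
    (hj : IsOpenEmbedding ⇑j) :
    (∃ N : Subgroup G, IsOpen (N : Set G) ∧ N.Normal ∧
      ∀ [inst : N.Normal],
        (∀ a b : G ⧸ N, a * b = b * a) ∧
        DiscreteTopology (G ⧸ N) ∧
        (∃ ψ : Λ →* G ⧸ N, Function.Injective ψ) ∧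
        ¬ Group.FG (G ⧸ N)) ∧
    ¬ ∃ C : Set G, IsCompact C ∧ Subgroup.closure C = ⊤ := by
  have hι : IsOpenEmbedding (j.comp SemidirectProduct.inl) :=
    hj.comp SemidirectProduct.isOpenEmbedding_inl
  set φ := conjScalar hι
  have hN : IsOpen (φ.ker : Set G) := isOpen_ker_conjScalar hι
  have hdisc : DiscreteTopology (G ⧸ φ.ker) := QuotientGroup.discreteTopology hN
  have hφ : Injective (φ.comp (j.comp SemidirectProduct.inr)) :=
    injective_conjScalar_comp_inr hρ hι
  have hnfg := QuotientGroup.not_fg_of_injective hΛ hφ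
  exact ⟨⟨φ.ker, hN, inferInstance, fun {_} => ⟨QuotientGroup.mul_comm_of_ker φ, hdisc,
    ⟨_, QuotientGroup.injective_mk'_comp hφ⟩, hnfg⟩⟩,
    fun ⟨C, hC, hgen⟩ => hnfg (QuotientGroup.fg_of_isCompact_closure_eq_top _ hC hgen)⟩

/-- Let `Λ` be a non-finitely-generated group of `p`-adic units (viewed
as a discrete group acting on `ℤ_p` by multiplication), let `H = ℤ_p ⋊ Λ`, and suppose
`H` is an open subgroup of a locally compact group `G`.  Then `G` has an open normal
subgroup `N` with `G/N` a discrete abelian group containing a copy of `Λ`, hence not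
finitely generated; in particular `G` is not compactly generated. -/
theorem stmt18 (p : ℕ) [Fact p.Prime] (Λ : Type*) [Group Λ] [TopologicalSpace Λ]
    [DiscreteTopology Λ] (ρ : Λ →* ℤ_[p]ˣ) (hρ : Function.Injective ρ)
    (hΛ : ¬ Group.FG Λ)
    {G : Type*} [Group G] [TopologicalSpace G] [IsTopologicalGroup G] [LocallyCompactSpace G]
    (j : (Multiplicative ℤ_[p] ⋊[unitsAction p ρ] Λ) →* G)
    (hj : IsOpenEmbedding ⇑j) :
    (∃ N : Subgroup G, IsOpen (N : Set G) ∧ N.Normal ∧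
      ∀ [inst : N.Normal],
        (∀ a b : G ⧸ N, a * b = b * a) ∧
        DiscreteTopology (G ⧸ N) ∧
        (∃ ψ : Λ →* G ⧸ N, Function.Injective ψ) ∧
        ¬ Group.FG (G ⧸ N)) ∧
    ¬ ∃ C : Set G, IsCompact C ∧ Subgroup.closure C = ⊤ :=
  stmt18_general p Λ ρ hρ hΛ j hj
end
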